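/- arXiv:2401.07716 — 4 statements merged into one kernel-verified Lean document; each statement's English description precedes it below -/
import Mathlib

section
/- Let ρ and σ be d×d density matrices with Tr(ρ²) > 1 - 4ε, Tr(σ²) > 1 - 4ε, and Tr(ρσ) > 1 - 2ε, where 0 ≤ ε < 1/16. Let ψ be a unit eigenvector of ρ for its largest eigenvalue. Then ⟨ψ, σψ⟩ > 1 - 14ε. -/
/-!
Since ρ ≤ p·1, Tr ρ² ≤ p Tr ρ = p, so p > 1 - 4ε. The projection P = |ψ⟩⟨ψ| commutes with ρ,
hence ρ - pP = (1 - P) ρ (1 - P) is positive semidefinite of trace 1 - p. As σ ≤ 1 (its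
eigenvalues are bounded by its trace), Tr((ρ - pP)σ) ≤ 1 - p, that is
Tr(ρσ) ≤ p⟨ψ, σψ⟩ + 1 - p. Combined with Tr(ρσ) > 1 - 2ε this gives
⟨ψ, σψ⟩ > 1 - 2ε/p ≥ 1 - 14ε, because p > 1/7.
-/

open Matrix
open scoped ComplexOrder

namespace Matrix

variable {𝕜 n : Type*} [RCLike 𝕜] [Fintype n]

lemma trace_vecMulVec_mul {R : Type*} [CommSemiring R] (u v : n → R) (M : Matrix n n R) :
    (vecMulVec u v * M).trace = v ⬝ᵥ M *ᵥ u := by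
  rw [trace_mul_comm, mul_vecMulVec, trace_vecMulVec, dotProduct_comm]

variable [DecidableEq n]

open scoped MatrixOrder in
lemma PosSemidef.trace_mul_nonneg {A B : Matrix n n 𝕜} (hA : A.PosSemidef)
    (hB : B.PosSemidef) : 0 ≤ (A * B).trace := by
  have hS := (CFC.sqrt_nonneg A).posSemidef.isHermitian.eq
  rw [← CFC.sqrt_mul_sqrt_self A hA.nonneg, Matrix.mul_assoc, trace_mul_comm]
  simpa only [hS] using (hB.mul_mul_conjTranspose_same (CFC.sqrt A)).trace_nonneg

lemma PosSemidef.re_trace_mul_le {A B : Matrix n n 𝕜} (hA : A.PosSemidef)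
    (hB : (1 - B).PosSemidef) : RCLike.re (A * B).trace ≤ RCLike.re A.trace := by
  have h := RCLike.nonneg_iff.mp (hA.trace_mul_nonneg hB)
  rw [Matrix.mul_sub, Matrix.mul_one, trace_sub, map_sub] at h
  linarith [h.1]

lemma PosSemidef.eigenvalues_le_re_trace {A : Matrix n n 𝕜} (hA : A.PosSemidef) (i : n) :
    hA.1.eigenvalues i ≤ RCLike.re A.trace := by
  rw [hA.1.trace_eq_sum_eigenvalues, map_sum]
  simp only [RCLike.ofReal_re]
  exact Finset.single_le_sum (fun j _ ↦ hA.eigenvalues_nonneg j) (Finset.mem_univ i)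

open scoped MatrixOrder in
lemma IsHermitian.posSemidef_smul_one_sub_of_eigenvalues_le {A : Matrix n n 𝕜}
    (hA : A.IsHermitian) {c : ℝ} (h : ∀ i, hA.eigenvalues i ≤ c) : (c • 1 - A).PosSemidef := by
  rw [← Algebra.algebraMap_eq_smul_one, ← Matrix.le_iff]
  refine le_algebraMap_of_spectrum_le (fun x hx ↦ ?_) hA.isSelfAdjoint
  rw [hA.spectrum_real_eq_range_eigenvalues] at hx
  obtain ⟨i, rfl⟩ := hx
  exact h i

lemma PosSemidef.re_trace_mul_self_le {A : Matrix n n 𝕜} (hA : A.PosSemidef) {c : ℝ}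
    (h : ∀ i, hA.1.eigenvalues i ≤ c) : RCLike.re (A * A).trace ≤ c * RCLike.re A.trace := by
  have hc := RCLike.nonneg_iff.mp
    (hA.trace_mul_nonneg (hA.1.posSemidef_smul_one_sub_of_eigenvalues_le h))
  rw [Matrix.mul_sub, trace_sub, Matrix.mul_smul, Matrix.mul_one, trace_smul, map_sub,
    RCLike.smul_re] at hc
  linarith [hc.1]

lemma PosSemidef.posSemidef_sub_smul_vecMulVec {A : Matrix n n 𝕜} (hA : A.PosSemidef)
    {v : n → 𝕜} (hv : star v ⬝ᵥ v = 1) {μ : ℝ} (hAv : A *ᵥ v = (μ : 𝕜) • v) :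
    (A - (μ : 𝕜) • vecMulVec v (star v)).PosSemidef := by
  set P := vecMulVec v (star v)
  have hP : Pᴴ = P := by simp [P]
  have hAP : A * P = (μ : 𝕜) • P := by rw [mul_vecMulVec, hAv, smul_vecMulVec]
  have hPA : P * A = (μ : 𝕜) • P := by
    simpa [hP, hA.1.eq] using congrArg (fun M : Matrix n n 𝕜 ↦ Mᴴ) hAP
  have hPP : P * P = P := by rw [vecMulVec_mul_vecMulVec, hv, one_smul]
  have hsplit : A - (μ : 𝕜) • P = (1 - P) * A * (1 - P)ᴴ := by
    rw [conjTranspose_sub, conjTranspose_one, hP, Matrix.sub_mul, Matrix.one_mul, hPA,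
      Matrix.mul_sub, Matrix.mul_one, Matrix.sub_mul, hAP, Matrix.smul_mul, hPP, sub_self,
      sub_zero]
  rw [hsplit]
  exact hA.mul_mul_conjTranspose_same _

lemma PosSemidef.re_trace_mul_le_of_mulVec_eq {A B : Matrix n n 𝕜} (hA : A.PosSemidef)
    (hB : (1 - B).PosSemidef) {v : n → 𝕜} (hv : star v ⬝ᵥ v = 1) {μ : ℝ}
    (hAv : A *ᵥ v = (μ : 𝕜) • v) :
    RCLike.re (A * B).trace ≤ μ * RCLike.re (star v ⬝ᵥ B *ᵥ v) + (RCLike.re A.trace - μ) := by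
  have hR := (hA.posSemidef_sub_smul_vecMulVec hv hAv).re_trace_mul_le hB
  rw [Matrix.sub_mul, trace_sub, trace_sub, Matrix.smul_mul, trace_smul, trace_smul,
    trace_vecMulVec_mul, trace_vecMulVec, dotProduct_comm v, hv] at hR
  simp only [map_sub, smul_eq_mul, RCLike.re_ofReal_mul, mul_one, RCLike.ofReal_re] at hR
  linarith

end Matrix

theorem eigvec_overlap_of_close_states_general {d : ℕ}
    (ρ σ : Matrix (Fin d) (Fin d) ℂ)
    (hρ : ρ.PosSemidef) (hρ1 : ρ.trace = 1)
    (hσ : σ.PosSemidef) (hσ1 : σ.trace = 1)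
    (ε : ℝ) (hε0 : 0 ≤ ε) (hε : ε < 1 / 16)
    (h1 : 1 - 4 * ε < ((ρ * ρ).trace).re)
    (h3 : 1 - 2 * ε < ((ρ * σ).trace).re)
    (ψ : Fin d → ℂ) (hψ : star ψ ⬝ᵥ ψ = 1)
    (p : ℝ) (heig : ρ.mulVec ψ = (p : ℂ) • ψ)
    (hmax : ∀ i, hρ.1.eigenvalues i ≤ p) :
    1 - 14 * ε < (star ψ ⬝ᵥ σ.mulVec ψ).re := by
  have hp : 1 - 4 * ε < p := by
    simpa [hρ1] using h1.trans_le (hρ.re_trace_mul_self_le hmax)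
  have hσ_le_one : (1 - σ).PosSemidef := by
    simpa using hσ.1.posSemidef_smul_one_sub_of_eigenvalues_le (c := 1)
      (by simpa [hσ1] using hσ.eigenvalues_le_re_trace)
  have hov := hρ.re_trace_mul_le_of_mulVec_eq hσ_le_one hψ heig
  simp only [hρ1, RCLike.re_to_complex, Complex.one_re] at hov
  have hpx : p - 2 * ε < p * (star ψ ⬝ᵥ σ *ᵥ ψ).re := by linarith
  nlinarith

theorem eigvec_overlap_of_close_states {d : ℕ}
    (ρ σ : Matrix (Fin d) (Fin d) ℂ)
    (hρ : ρ.PosSemidef) (hρ1 : ρ.trace = 1)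
    (hσ : σ.PosSemidef) (hσ1 : σ.trace = 1)
    (ε : ℝ) (hε0 : 0 ≤ ε) (hε : ε < 1 / 16)
    (h1 : 1 - 4 * ε < ((ρ * ρ).trace).re)
    (h2 : 1 - 4 * ε < ((σ * σ).trace).re)
    (h3 : 1 - 2 * ε < ((ρ * σ).trace).re)
    (ψ : Fin d → ℂ) (hψ : star ψ ⬝ᵥ ψ = 1)
    (p : ℝ) (heig : ρ.mulVec ψ = (p : ℂ) • ψ)
    (hmax : ∀ i, hρ.1.eigenvalues i ≤ p) :
    1 - 14 * ε < (star ψ ⬝ᵥ σ.mulVec ψ).re :=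
  eigvec_overlap_of_close_states_general ρ σ hρ hρ1 hσ hσ1 ε hε0 hε h1 h3 ψ hψ p heig hmax
end

section
/- For density matrices ρ and σ of ranks r_ρ and r_σ on a finite-dimensional Hilbert space, the trace distance T(ρ,σ) = (1/2)‖ρ-σ‖₁ and the squared Hilbert–Schmidt distance D_HS(ρ,σ) = Tr((ρ-σ)²) satisfy T(ρ,σ)² ≤ (r_ρ·r_σ)/(r_ρ+r_σ) · D_HS(ρ,σ). -/
/-!
Write `Δ = ρ - σ` with eigenvalues `λᵢ`. Since `Tr Δ = 0`, the positive and the negative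
eigenvalues both sum (in absolute value) to `T = ‖Δ‖₁ / 2`, so by Cauchy–Schwarz
`T² ≤ p · ∑_{λᵢ > 0} λᵢ²` and `T² ≤ q · ∑_{λᵢ < 0} λᵢ²`, where `p` and `q` count the positive and
negative eigenvalues. Moreover `p ≤ rank ρ`: on the span of the eigenvectors of `Δ` with positive
eigenvalues, `ρ ≥ Δ` is positive definite, hence injective; likewise `q ≤ rank σ`. Adding
`rank σ` times the first bound to `rank ρ` times the second gives the claim.
-/

open Matrix
open scoped ComplexOrder

/-- The positive semidefinite square root of a positive semidefinite matrix
(the definition `Matrix.PosSemidef.sqrt` of the older Mathlib). -/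
noncomputable def posSemidefSqrt {n : Type*} [Fintype n] [DecidableEq n]
    {A : Matrix n n ℂ} (hA : A.PosSemidef) : Matrix n n ℂ :=
  (hA.1.eigenvectorUnitary : Matrix n n ℂ) *
    diagonal ((fun x : ℝ => (x : ℂ)) ∘ Real.sqrt ∘ hA.1.eigenvalues) *
    (star hA.1.eigenvectorUnitary : Matrix n n ℂ)

/-- The trace norm `‖A‖₁ = Tr √(Aᴴ A)`. -/
noncomputable def traceNorm {n : Type*} [Fintype n] [DecidableEq n]
    (A : Matrix n n ℂ) : ℝ :=
  (posSemidefSqrt (Matrix.posSemidef_conjTranspose_mul_self A)).trace.re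

/-- The trace distance `T(ρ,σ) = ‖ρ - σ‖₁ / 2`. -/
noncomputable def traceDist {n : Type*} [Fintype n] [DecidableEq n]
    (ρ σ : Matrix n n ℂ) : ℝ :=
  traceNorm (ρ - σ) / 2

open Finset Module Submodule RCLike
open scoped InnerProductSpace

lemma le_mul_div_add_mul_add {u a b x y : ℝ} (ha : 0 ≤ a) (hb : 0 ≤ b)
    (hux : u ≤ a * x) (huy : u ≤ b * y) : u ≤ a * b / (a + b) * (x + y) := by
  rcases (add_nonneg ha hb).eq_or_lt with hab0 | hab
  · have ha0 : a = 0 := by linarith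
    simp only [← hab0, div_zero, zero_mul]
    simpa [ha0] using hux
  · rw [div_mul_eq_mul_div, le_div_iff₀ hab]
    nlinarith [mul_le_mul_of_nonneg_left hux hb, mul_le_mul_of_nonneg_left huy ha]

section RealSpectrum

variable {ι : Type*} [Fintype ι] {μ : ι → ℝ}

lemma half_sum_abs_eq_sum_pos (hμ : ∑ i, μ i = 0) :
    (∑ i, |μ i|) / 2 = ∑ i with 0 < μ i, μ i := by
  rw [← sum_filter_add_sum_filter_not univ (fun i => 0 < μ i)] at hμ ⊢
  have habs : ∑ i with ¬0 < μ i, |μ i| = -∑ i with ¬0 < μ i, μ i := by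
    rw [← sum_neg_distrib]
    exact sum_congr rfl fun i hi => abs_of_nonpos (not_lt.mp (mem_filter.mp hi).2)
  rw [habs, sum_congr rfl fun i hi => abs_of_pos (mem_filter.mp hi).2]
  linarith

lemma sq_half_sum_abs_le_card_mul_sum_sq_pos (hμ : ∑ i, μ i = 0) :
    ((∑ i, |μ i|) / 2) ^ 2 ≤ #{i | 0 < μ i} * ∑ i with 0 < μ i, μ i ^ 2 := by
  rw [half_sum_abs_eq_sum_pos hμ]
  exact sq_sum_le_card_mul_sum_sq

lemma sum_sq_pos_add_sum_sq_neg_le_sum_sq :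
    ∑ i with 0 < μ i, μ i ^ 2 + ∑ i with μ i < 0, μ i ^ 2 ≤ ∑ i, μ i ^ 2 := by
  rw [sum_filter, sum_filter, ← sum_add_distrib]
  gcongr with i
  split_ifs <;> linarith [sq_nonneg (μ i)]

lemma sq_half_sum_abs_le_mul_div_add_mul_sum_sq {a b : ℕ} (hμ : ∑ i, μ i = 0)
    (ha : #{i | 0 < μ i} ≤ a) (hb : #{i | μ i < 0} ≤ b) :
    ((∑ i, |μ i|) / 2) ^ 2 ≤ (a : ℝ) * b / (a + b) * ∑ i, μ i ^ 2 := by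
  have hpos := sq_half_sum_abs_le_card_mul_sum_sq_pos hμ
  have hneg := sq_half_sum_abs_le_card_mul_sum_sq_pos (μ := -μ) (by simp [hμ])
  simp only [Pi.neg_apply, abs_neg, neg_sq, Left.neg_pos_iff] at hneg
  calc ((∑ i, |μ i|) / 2) ^ 2
      ≤ (a : ℝ) * b / (a + b) * (∑ i with 0 < μ i, μ i ^ 2 + ∑ i with μ i < 0, μ i ^ 2) :=
        le_mul_div_add_mul_add (by positivity) (by positivity)
          (hpos.trans (by gcongr)) (hneg.trans (by gcongr))
    _ ≤ (a : ℝ) * b / (a + b) * ∑ i, μ i ^ 2 := by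
        gcongr
        exact sum_sq_pos_add_sum_sq_neg_le_sum_sq

end RealSpectrum

section Orthonormal

variable {𝕜 E ι : Type*} [RCLike 𝕜] [NormedAddCommGroup E] [InnerProductSpace 𝕜 E] [Fintype ι]
  {v : ι → E} {T : E →ₗ[𝕜] E} {μ : ι → ℝ}

lemma Orthonormal.re_inner_map_sum_smul (hv : Orthonormal 𝕜 v)
    (hT : ∀ i, T (v i) = (μ i : 𝕜) • v i) (c : ι → 𝕜) :
    re ⟪∑ i, c i • v i, T (∑ i, c i • v i)⟫_𝕜 = ∑ i, μ i * ‖c i‖ ^ 2 := by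
  simp only [map_sum, map_smul, hT, smul_smul]
  rw [hv.inner_sum, map_sum]
  refine sum_congr rfl fun i _ => ?_
  rw [← mul_assoc, RCLike.conj_mul, ← ofReal_pow, ← ofReal_mul, ofReal_re, mul_comm]

lemma Orthonormal.eq_zero_of_re_inner_map_nonpos (hv : Orthonormal 𝕜 v)
    (hT : ∀ i, T (v i) = (μ i : 𝕜) • v i) (hμ : ∀ i, 0 < μ i) {x : E}
    (hx : x ∈ span 𝕜 (Set.range v)) (hTx : re ⟪x, T x⟫_𝕜 ≤ 0) : x = 0 := by
  obtain ⟨c, rfl⟩ := mem_span_range_iff_exists_fun 𝕜 |>.mp hx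
  rw [hv.re_inner_map_sum_smul hT] at hTx
  have hnonneg : ∀ i ∈ univ, 0 ≤ μ i * ‖c i‖ ^ 2 := fun i _ => by
    have := hμ i
    positivity
  have hterms := (sum_eq_zero_iff_of_nonneg hnonneg).mp
    (hTx.antisymm (sum_nonneg hnonneg))
  have hc : ∀ i, c i = 0 := fun i => by
    simpa [(hμ i).ne'] using hterms i (mem_univ i)
  simp [hc]

lemma LinearIndependent.card_le_finrank_range {K M N : Type*} [Field K] [AddCommGroup M]
    [Module K M] [AddCommGroup N] [Module K N] [FiniteDimensional K M] {w : ι → M}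
    (hw : LinearIndependent K w) {f : M →ₗ[K] N}
    (hf : Disjoint (span K (Set.range w)) (LinearMap.ker f)) :
    Fintype.card ι ≤ finrank K (LinearMap.range f) :=
  (hw.map (f := f.rangeRestrict) (by rwa [LinearMap.ker_rangeRestrict])).fintype_card_le_finrank

variable [FiniteDimensional 𝕜 E]

lemma Orthonormal.card_le_finrank_range (hv : Orthonormal 𝕜 v)
    (hT : ∀ i, T (v i) = (μ i : 𝕜) • v i) (hμ : ∀ i, 0 < μ i) {f : E →ₗ[𝕜] E}
    (hf : ∀ x, f x = 0 → re ⟪x, T x⟫_𝕜 ≤ 0) :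
    Fintype.card ι ≤ finrank 𝕜 (LinearMap.range f) :=
  hv.linearIndependent.card_le_finrank_range <| disjoint_def.mpr fun x hx hfx =>
    hv.eq_zero_of_re_inner_map_nonpos hT hμ hx (hf x hfx)

end Orthonormal

namespace Matrix

variable {𝕜 n : Type*} [RCLike 𝕜] [Fintype n] [DecidableEq n] {A : Matrix n n 𝕜}

lemma rank_eq_finrank_range_toEuclideanLin (A : Matrix n n 𝕜) :
    A.rank = finrank 𝕜 (LinearMap.range (toEuclideanLin A)) :=
  A.rank_eq_finrank_range_toLin (PiLp.basisFun 2 𝕜 n) (PiLp.basisFun 2 𝕜 n)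

namespace IsHermitian

lemma toEuclideanLin_eigenvectorBasis (hA : A.IsHermitian) (i : n) :
    toEuclideanLin A (hA.eigenvectorBasis i) = (hA.eigenvalues i : 𝕜) • hA.eigenvectorBasis i := by
  rw [toLpLin_apply, hA.mulVec_eigenvectorBasis, RCLike.real_smul_eq_coe_smul (K := 𝕜)]
  rfl

lemma card_pos_eigenvalues_le_rank (hA : A.IsHermitian) {B : Matrix n n 𝕜}
    (hBA : (B - A).PosSemidef) : Fintype.card {i // 0 < hA.eigenvalues i} ≤ B.rank := by
  rw [rank_eq_finrank_range_toEuclideanLin]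
  refine (hA.eigenvectorBasis.orthonormal.comp _ Subtype.val_injective).card_le_finrank_range
    (fun i => hA.toEuclideanLin_eigenvectorBasis i) (fun i => i.2) fun x hx => ?_
  have := (isPositive_toEuclideanLin_iff.mpr hBA).re_inner_nonneg_right x
  rw [map_sub, LinearMap.sub_apply, hx, zero_sub, inner_neg_right, map_neg] at this
  linarith

lemma card_neg_eigenvalues_le_rank (hA : A.IsHermitian) {B : Matrix n n 𝕜}
    (hBA : (B + A).PosSemidef) : Fintype.card {i // hA.eigenvalues i < 0} ≤ B.rank := by
  rw [rank_eq_finrank_range_toEuclideanLin]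
  refine (hA.eigenvectorBasis.orthonormal.comp _ Subtype.val_injective).card_le_finrank_range
    (T := -toEuclideanLin A) (μ := fun i : {i // hA.eigenvalues i < 0} => -hA.eigenvalues i)
    (fun i => by simp [hA.toEuclideanLin_eigenvectorBasis]) (fun i => neg_pos.mpr i.2)
    fun x hx => ?_
  have := (isPositive_toEuclideanLin_iff.mpr hBA).re_inner_nonneg_right x
  rw [map_add, LinearMap.add_apply, hx, zero_add] at this
  simpa [inner_neg_right] using this

lemma trace_cfc (hA : A.IsHermitian) (f : ℝ → ℝ) :
    (cfc (R := ℝ) f A).trace = ∑ i, (f (hA.eigenvalues i) : 𝕜) := by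
  rw [hA.cfc_eq f, IsHermitian.cfc, Unitary.conjStarAlgAut_apply, trace_mul_cycle,
    Unitary.coe_star_mul_self, one_mul, trace_diagonal]
  rfl

lemma re_trace_mul_self (hA : A.IsHermitian) :
    re (A * A).trace = ∑ i, hA.eigenvalues i ^ 2 := by
  rw [← sq, ← cfc_pow_id (R := ℝ) A 2 hA.isSelfAdjoint, hA.trace_cfc, map_sum]
  simp only [ofReal_re]

end IsHermitian

end Matrix

lemma posSemidefSqrt_eq_cfc {n : Type*} [Fintype n] [DecidableEq n] {A : Matrix n n ℂ}
    (hA : A.PosSemidef) : posSemidefSqrt hA = cfc Real.sqrt A := by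
  rw [hA.1.cfc_eq, IsHermitian.cfc, Unitary.conjStarAlgAut_apply]
  rfl

lemma traceNorm_eq_sum_abs_eigenvalues {n : Type*} [Fintype n] [DecidableEq n]
    {A : Matrix n n ℂ} (hA : A.IsHermitian) : traceNorm A = ∑ i, |hA.eigenvalues i| := by
  have hsq : Aᴴ * A = A ^ 2 := by rw [hA.eq, sq]
  rw [traceNorm, posSemidefSqrt_eq_cfc, hsq, ← cfc_comp_pow Real.sqrt 2 A (ha := hA.isSelfAdjoint)]
  simp [Real.sqrt_sq_eq_abs, hA.trace_cfc]

theorem traceDist_sq_le_rank_mul_hs {d : ℕ}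
    (ρ σ : Matrix (Fin d) (Fin d) ℂ)
    (hρ : ρ.PosSemidef) (hρ1 : ρ.trace = 1)
    (hσ : σ.PosSemidef) (hσ1 : σ.trace = 1) :
    (traceDist ρ σ) ^ 2 ≤
      ((ρ.rank : ℝ) * (σ.rank : ℝ) / ((ρ.rank : ℝ) + (σ.rank : ℝ))) *
        (((ρ - σ) * (ρ - σ)).trace).re := by
  have hΔ : (ρ - σ).IsHermitian := hρ.1.sub hσ.1
  have hsum : ∑ i, hΔ.eigenvalues i = 0 := by
    have htrace := hΔ.trace_eq_sum_eigenvalues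
    rw [trace_sub, hρ1, hσ1, sub_self] at htrace
    exact (RCLike.ofReal_eq_zero (K := ℂ)).mp (by rw [RCLike.ofReal_sum, ← htrace])
  have hpos := hΔ.card_pos_eigenvalues_le_rank (B := ρ) (by rwa [sub_sub_cancel])
  have hneg := hΔ.card_neg_eigenvalues_le_rank (B := σ) (by rwa [add_sub_cancel])
  rw [Fintype.card_subtype] at hpos hneg
  rw [traceDist, traceNorm_eq_sum_abs_eigenvalues hΔ, ← RCLike.re_to_complex,
    hΔ.re_trace_mul_self]
  exact sq_half_sum_abs_le_mul_div_add_mul_sum_sq hsum hpos hneg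
end

section
/- Under the hypotheses of the preceding setup (Tr(Uρ_{AB}U†·(|0⟩⟨0|_A⊗I_B)) ≥ 1-ε with ρ* = Uρ_{AB}U†, ρ*_A = Tr_B ρ*, ρ*_B = Tr_A ρ*), the Hilbert–Schmidt distance satisfies Tr((ρ* - |0⟩⟨0|_A⊗ρ*_B)²) ≤ 4ε. -/
open Matrix
open scoped Kronecker ComplexOrder

/-- Partial trace over system `A` of a matrix on the bipartite system `A ⊗ B`. -/
noncomputable def ptraceA {a b : ℕ} (M : Matrix (Fin a × Fin b) (Fin a × Fin b) ℂ) :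
    Matrix (Fin b) (Fin b) ℂ :=
  Matrix.of fun i j => ∑ k : Fin a, M (k, i) (k, j)

/-!
Write `σ = UρU†`, `t k = ⟨k|Tr_B σ|k⟩` and split `D = σ - |0⟩⟨0| ⊗ Tr_A σ` into `b × b` blocks.
Outside the `(0,0)` block `D` agrees with `σ`, and the block `(k,l)` of a positive semidefinite
matrix has squared Hilbert–Schmidt norm at most `t k * t l` (entrywise Cauchy–Schwarz
`|σ x y|² ≤ σ x x σ y y`). The `(0,0)` block of `D` is `-∑_{m ≠ 0} σ_mm`, positive semidefinite of
trace `1 - t 0`, so its squared norm is at most `(1 - t 0)²`. Altogether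
`Tr D² ≤ (1 - t 0²) + (1 - t 0)² = 2 (1 - t 0) ≤ 2ε`.
-/

namespace Matrix

lemma PosSemidef.normSq_apply_le {n : Type*} {M : Matrix n n ℂ} (hM : M.PosSemidef) (x y : n) :
    Complex.normSq (M x y) ≤ (M x x).re * (M y y).re := by
  have hdet := (hM.submatrix ![x, y]).det_nonneg
  simp only [det_fin_two, submatrix_apply, cons_val_zero, cons_val_one] at hdet
  rw [← hM.isHermitian.apply y x, ← hM.isHermitian.coe_re_apply_self x,
    ← hM.isHermitian.coe_re_apply_self y, Complex.star_def, Complex.mul_conj] at hdet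
  simpa [sub_nonneg] using (Complex.le_def.mp hdet).1

lemma PosSemidef.sum_normSq_apply_le {n κ : Type*} [Fintype κ] {M : Matrix n n ℂ}
    (hM : M.PosSemidef) (f g : κ → n) :
    ∑ i, ∑ j, Complex.normSq (M (f i) (g j)) ≤
      (∑ i, (M (f i) (f i)).re) * ∑ j, (M (g j) (g j)).re := by
  rw [Finset.sum_mul_sum]
  gcongr with i _ j _
  exact hM.normSq_apply_le _ _

lemma IsHermitian.re_trace_mul_self_s13 {n : Type*} [Fintype n] {A : Matrix n n ℂ}
    (hA : A.IsHermitian) : (A * A).trace.re = ∑ i, ∑ j, Complex.normSq (A i j) := by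
  have (i j : n) : A i j * A j i = Complex.normSq (A i j) := by
    rw [← hA.apply j i, Complex.star_def, Complex.mul_conj]
  simp only [trace, diag, mul_apply, this, Complex.re_sum, Complex.ofReal_re]

section BlockMatrix

variable {ι κ : Type*} [Fintype κ]

/-- The diagonal entry `⟨k|Tr_B M|k⟩` of the reduction of `M` to the first factor. -/
noncomputable def marginalWeight (M : Matrix (ι × κ) (ι × κ) ℂ) (k : ι) : ℝ :=
  ∑ i, (M (k, i) (k, i)).re

lemma sum_marginalWeight [Fintype ι] (M : Matrix (ι × κ) (ι × κ) ℂ) :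
    ∑ k, marginalWeight M k = M.trace.re := by
  simp only [marginalWeight, trace, diag, Fintype.sum_prod_type, Complex.re_sum]

lemma PosSemidef.marginalWeight_nonneg {M : Matrix (ι × κ) (ι × κ) ℂ} (hM : M.PosSemidef)
    (k : ι) : 0 ≤ marginalWeight M k :=
  Finset.sum_nonneg fun _ _ => (Complex.nonneg_iff.mp hM.diag_nonneg).1

lemma PosSemidef.marginalWeight_le_re_trace [Fintype ι] {M : Matrix (ι × κ) (ι × κ) ℂ}
    (hM : M.PosSemidef) (k : ι) : marginalWeight M k ≤ M.trace.re := by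
  rw [← sum_marginalWeight]
  exact Finset.single_le_sum (fun l _ => hM.marginalWeight_nonneg l) (Finset.mem_univ k)

lemma re_trace_mul_single_kronecker_one [Fintype ι] [DecidableEq ι] [DecidableEq κ]
    (M : Matrix (ι × κ) (ι × κ) ℂ) (k : ι) :
    (M * (single k k 1 ⊗ₖ (1 : Matrix κ κ ℂ))).trace.re = marginalWeight M k := by
  simp [marginalWeight, trace, mul_apply, kroneckerMap_apply, single_apply, one_apply,
    Fintype.sum_prod_type, ite_and, Complex.re_sum]

end BlockMatrix

section PartialTrace

variable {a b : ℕ}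

lemma isHermitian_ptraceA {M : Matrix (Fin a × Fin b) (Fin a × Fin b) ℂ} (hM : M.IsHermitian) :
    (ptraceA M).IsHermitian :=
  IsHermitian.ext fun i j => by simp only [ptraceA, of_apply, star_sum, hM.apply]

lemma IsHermitian.sub_single_kronecker_ptraceA {M : Matrix (Fin a × Fin b) (Fin a × Fin b) ℂ}
    (hM : M.IsHermitian) (k₀ : Fin a) :
    (M - single k₀ k₀ (1 : ℂ) ⊗ₖ ptraceA M).IsHermitian := by
  refine hM.sub ?_
  rw [IsHermitian, conjTranspose_kronecker, conjTranspose_single, star_one,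
    (isHermitian_ptraceA hM).eq]

lemma sub_single_kronecker_ptraceA_apply_of_ne (M : Matrix (Fin a × Fin b) (Fin a × Fin b) ℂ)
    {k₀ k l : Fin a} (h : ¬(k₀ = k ∧ k₀ = l)) (i j : Fin b) :
    (M - single k₀ k₀ (1 : ℂ) ⊗ₖ ptraceA M) (k, i) (l, j) = M (k, i) (l, j) := by
  simp [single_apply_of_ne (h := h)]

lemma sub_single_kronecker_ptraceA_apply_self (M : Matrix (Fin a × Fin b) (Fin a × Fin b) ℂ)
    (k₀ : Fin a) (i j : Fin b) :
    (M - single k₀ k₀ (1 : ℂ) ⊗ₖ ptraceA M) (k₀, i) (k₀, j) =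
      -∑ m ∈ Finset.univ.erase k₀, M (m, i) (m, j) := by
  rw [sub_apply, kroneckerMap_apply, single_apply_same, one_mul, ptraceA, of_apply,
    ← Finset.add_sum_erase _ _ (Finset.mem_univ k₀), sub_add_cancel_left]

theorem PosSemidef.re_trace_sq_sub_single_kronecker_ptraceA_le
    {M : Matrix (Fin a × Fin b) (Fin a × Fin b) ℂ} (hM : M.PosSemidef) (k₀ : Fin a) :
    ((M - single k₀ k₀ (1 : ℂ) ⊗ₖ ptraceA M) * (M - single k₀ k₀ (1 : ℂ) ⊗ₖ ptraceA M)).trace.re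
      ≤ 2 * M.trace.re * (M.trace.re - marginalWeight M k₀) := by
  set D := M - single k₀ k₀ (1 : ℂ) ⊗ₖ ptraceA M
  set w := marginalWeight M
  set T := M.trace.re
  let G : Fin a × Fin a → ℝ := fun p => ∑ i, ∑ j, Complex.normSq (D (p.1, i) (p.2, j))
  have hsplit : (D * D).trace.re = ∑ p, G p := by
    rw [(hM.isHermitian.sub_single_kronecker_ptraceA k₀).re_trace_mul_self_s13]
    simp only [Fintype.sum_prod_type, G]
    exact Finset.sum_congr rfl fun k _ => Finset.sum_comm
  have hoff : ∀ p ∈ Finset.univ.erase (k₀, k₀), G p ≤ w p.1 * w p.2 := by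
    rintro ⟨k, l⟩ hp
    have hne : ¬(k₀ = k ∧ k₀ = l) := fun h => Finset.ne_of_mem_erase hp (by rw [← h.1, ← h.2])
    simp only [G, D, sub_single_kronecker_ptraceA_apply_of_ne M hne]
    exact hM.sum_normSq_apply_le _ _
  have hdiag : G (k₀, k₀) ≤ (T - w k₀) ^ 2 := by
    let R := ∑ m ∈ Finset.univ.erase k₀, M.submatrix (m, ·) (m, ·)
    have hR : R.PosSemidef := posSemidef_sum _ fun m _ => hM.submatrix _
    have hRtr : ∑ i, (R i i).re = T - w k₀ := by
      simp only [R, sum_apply, submatrix_apply, Complex.re_sum, T, w, ← sum_marginalWeight]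
      rw [Finset.sum_comm, Finset.sum_erase_eq_sub (Finset.mem_univ k₀)]
      rfl
    have hDR (i j : Fin b) : Complex.normSq (D (k₀, i) (k₀, j)) = Complex.normSq (R i j) := by
      simp only [D, sub_single_kronecker_ptraceA_apply_self, Complex.normSq_neg, R, sum_apply,
        submatrix_apply]
    simp only [G, hDR, sq, ← hRtr]
    exact hR.sum_normSq_apply_le id id
  have hsq : ∑ p : Fin a × Fin a, w p.1 * w p.2 = T ^ 2 := by
    rw [Fintype.sum_prod_type, ← Finset.sum_mul_sum, sum_marginalWeight, sq]
  calc (D * D).trace.re = G (k₀, k₀) + ∑ p ∈ Finset.univ.erase (k₀, k₀), G p := by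
        rw [hsplit, Finset.add_sum_erase _ _ (Finset.mem_univ _)]
    _ ≤ (T - w k₀) ^ 2 + ∑ p ∈ Finset.univ.erase (k₀, k₀), w p.1 * w p.2 :=
        add_le_add hdiag (Finset.sum_le_sum hoff)
    _ = 2 * T * (T - w k₀) := by
        rw [Finset.sum_erase_eq_sub (Finset.mem_univ _), hsq]
        ring

end PartialTrace

end Matrix

theorem hs_dist_le_of_approx_disentangling {a b : ℕ} [NeZero a]
    (ρ : Matrix (Fin a × Fin b) (Fin a × Fin b) ℂ)
    (hρ : ρ.PosSemidef) (hρ1 : ρ.trace = 1)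
    (U : Matrix (Fin a × Fin b) (Fin a × Fin b) ℂ)
    (hU : U ∈ Matrix.unitaryGroup (Fin a × Fin b) ℂ)
    (ε : ℝ)
    (hdis : 1 - ε ≤ (((U * ρ * Uᴴ) *
      ((Matrix.single (0 : Fin a) (0 : Fin a) (1 : ℂ)) ⊗ₖ
        (1 : Matrix (Fin b) (Fin b) ℂ))).trace).re) :
    (((U * ρ * Uᴴ -
        (Matrix.single (0 : Fin a) (0 : Fin a) (1 : ℂ)) ⊗ₖ ptraceA (U * ρ * Uᴴ)) *
      (U * ρ * Uᴴ -
        (Matrix.single (0 : Fin a) (0 : Fin a) (1 : ℂ)) ⊗ₖ ptraceA (U * ρ * Uᴴ))).trace).re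
      ≤ 4 * ε := by
  have hσ : (U * ρ * Uᴴ).PosSemidef := hρ.mul_mul_conjTranspose_same U
  have htr : (U * ρ * Uᴴ).trace = 1 := by
    rw [trace_mul_cycle, ← star_eq_conjTranspose, mem_unitaryGroup_iff'.mp hU, one_mul, hρ1]
  have hweight := hσ.marginalWeight_le_re_trace 0
  have hbound := hσ.re_trace_sq_sub_single_kronecker_ptraceA_le 0
  rw [re_trace_mul_single_kronecker_one] at hdis
  rw [htr, Complex.one_re] at hweight hbound
  linarith
end

section
/- Let ρ and σ be density matrices on (ℂ²)^{⊗n}, let S be the span of the union of the supports of ρ and σ, with k = dim S and r = 2^{⌈log₂ k⌉} ≤ 2^n. Then there exists a single unitary U on (ℂ²)^{⊗n} and density matrices ρ*_B, σ*_B on (ℂ²)^{⊗ log₂ r} such that UρU† = (|0⟩⟨0|)^{⊗(n-log₂ r)} ⊗ ρ*_B and UσU† = (|0⟩⟨0|)^{⊗(n-log₂ r)} ⊗ σ*_B. -/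
/-!
Take an orthonormal basis of `ℂ^(2^n)` whose first `k` vectors span `S = supp ρ + supp σ` and let
`U` be the unitary sending it to the standard basis. Then `UρU†` and `UσU†` have all rows and
columns of index `≥ k` zero, in particular those of index `≥ 2^⌈log₂ k⌉`. Writing
`Fin (2^n) = Fin (2^(n-m)) × Fin (2^m)`, these are exactly the indices whose first component is
nonzero, so a positive semidefinite matrix of this shape is `|0⟩⟨0| ⊗ B` with `B` its top-left
block, which is again positive semidefinite of the same trace.
-/

open Matrix Module
open scoped Kronecker ComplexOrder InnerProductSpace

/-- The support of a matrix, i.e. the range of the associated linear map;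
for a density matrix this is the span of the eigenvectors with nonzero eigenvalue. -/
noncomputable def matSupport {d : ℕ} (ρ : Matrix (Fin d) (Fin d) ℂ) :
    Submodule ℂ (Fin d → ℂ) :=
  LinearMap.range ρ.mulVecLin

theorem OrthonormalBasis.exists_apply_mem_orthogonal_of_finrank_le {𝕜 E : Type*} [RCLike 𝕜]
    [NormedAddCommGroup E] [InnerProductSpace 𝕜 E] [FiniteDimensional 𝕜 E]
    {d : ℕ} (hd : finrank 𝕜 E = d) (S : Submodule 𝕜 E) :
    ∃ b : OrthonormalBasis (Fin d) 𝕜 E, ∀ i : Fin d, finrank 𝕜 S ≤ i → b i ∈ Sᗮ := by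
  set k := finrank 𝕜 S
  have hkd : k ≤ d := hd ▸ S.finrank_le
  let b₀ := stdOrthonormalBasis 𝕜 S
  let v : Fin d → E := fun i => if h : (i : ℕ) < k then b₀ ⟨i, h⟩ else 0
  let s : Set (Fin d) := {i | (i : ℕ) < k}
  have hv : Orthonormal 𝕜 (s.domRestrict v) := by
    have : s.domRestrict v = S.subtypeₗᵢ ∘ b₀ ∘ fun i : s => ⟨i, i.2⟩ := by
      ext i
      exact dif_pos i.2
    rw [this]
    exact (b₀.orthonormal.comp_linearIsometry S.subtypeₗᵢ).comp _
      fun i j h => Subtype.ext (Fin.ext (Fin.mk.inj_iff.mp h))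
  obtain ⟨b, hb⟩ := hv.exists_orthonormalBasis_extension_of_card_eq (by simp [hd])
  have hb₀ (l : Fin k) : (b₀ l : E) = b (Fin.castLE hkd l) := by
    rw [hb _ (show (l : ℕ) < k from l.2)]
    simp [v]
  refine ⟨b, fun i hi => (Submodule.mem_orthogonal' _ _).mpr fun x hx => ?_⟩
  lift x to S using hx
  rw [← b₀.sum_repr x]
  simp only [Submodule.coe_sum, Submodule.coe_smul, inner_sum, inner_smul_right, hb₀,
    orthonormal_iff_ite.mp b.orthonormal]
  refine Finset.sum_eq_zero fun l _ => ?_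
  have hil : i ≠ Fin.castLE hkd l := fun h => (congrArg Fin.val h ▸ hi).not_gt l.2
  rw [if_neg hil, mul_zero]

theorem OrthonormalBasis.toMatrix_basisFun_mulVec {𝕜 ι : Type*} [RCLike 𝕜] [Fintype ι]
    [DecidableEq ι] (b : OrthonormalBasis ι 𝕜 (EuclideanSpace 𝕜 ι)) (x : ι → 𝕜) (i : ι) :
    (b.toBasis.toMatrix (EuclideanSpace.basisFun ι 𝕜) *ᵥ x) i = ⟪b i, WithLp.toLp 2 x⟫_𝕜 := by
  have := (EuclideanSpace.basisFun ι 𝕜).toBasis.toMatrix_mulVec_repr b.toBasis (WithLp.toLp 2 x)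
  simp only [OrthonormalBasis.coe_toBasis] at this
  rw [← b.repr_apply_apply]
  exact congrFun this i

theorem exists_unitary_mulVec_apply_eq_zero {𝕜 : Type*} [RCLike 𝕜] {d : ℕ}
    (S : Submodule 𝕜 (Fin d → 𝕜)) :
    ∃ U ∈ unitaryGroup (Fin d) 𝕜, ∀ x ∈ S, ∀ i : Fin d, finrank 𝕜 S ≤ i → (U *ᵥ x) i = 0 := by
  let S' := S.map (WithLp.linearEquiv 2 𝕜 (Fin d → 𝕜)).symm.toLinearMap
  obtain ⟨b, hb⟩ := OrthonormalBasis.exists_apply_mem_orthogonal_of_finrank_le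
    (finrank_euclideanSpace_fin (𝕜 := 𝕜) (n := d)) S'
  have hS' : finrank 𝕜 S' = finrank 𝕜 S := LinearEquiv.finrank_map_eq _ _
  refine ⟨_, b.toMatrix_orthonormalBasis_mem_unitary (EuclideanSpace.basisFun _ 𝕜),
    fun x hx i hi => ?_⟩
  rw [b.toMatrix_basisFun_mulVec]
  exact Submodule.inner_left_of_mem_orthogonal (Submodule.mem_map_of_mem hx) (hb i (hS' ▸ hi))

theorem Matrix.trace_reindex {m n R : Type*} [Fintype m] [Fintype n] [AddCommMonoid R]
    (e : m ≃ n) (M : Matrix m m R) : (reindex e e M).trace = M.trace :=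
  e.symm.sum_comp fun i => M i i

theorem Matrix.eq_reindex_single_kronecker_submatrix {α β κ R : Type*} [DecidableEq α]
    [MulZeroOneClass R] (e : α × β ≃ κ) (a : α) (A : Matrix κ κ R)
    (hA : ∀ p q p' q', (p ≠ a ∨ p' ≠ a) → A (e (p, q)) (e (p', q')) = 0) :
    A = reindex e e (single a a 1 ⊗ₖ A.submatrix (fun q => e (a, q)) (fun q => e (a, q))) := by
  ext i j
  obtain ⟨⟨p, q⟩, rfl⟩ := e.surjective i
  obtain ⟨⟨p', q'⟩, rfl⟩ := e.surjective j
  by_cases h : p = a ∧ p' = a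
  · obtain ⟨rfl, rfl⟩ := h
    simp
  · rw [hA p q p' q' (not_and_or.mp h)]
    have hs : single a a (1 : R) p p' = 0 :=
      single_apply_of_ne _ _ _ _ _ fun h' => h ⟨h'.1.symm, h'.2.symm⟩
    simp [hs]

theorem Matrix.PosSemidef.exists_eq_reindex_single_kronecker {𝕜 : Type*} [RCLike 𝕜]
    {a b N : ℕ} [NeZero a] (h : a * b = N) {A : Matrix (Fin N) (Fin N) 𝕜} (hA : A.PosSemidef)
    (h0 : ∀ i j : Fin N, b ≤ i → A i j = 0) :
    ∃ B : Matrix (Fin b) (Fin b) 𝕜, B.PosSemidef ∧ B.trace = A.trace ∧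
      A = reindex (finProdFinEquiv.trans (finCongr h)) (finProdFinEquiv.trans (finCongr h))
        (single 0 0 1 ⊗ₖ B) := by
  set e := finProdFinEquiv.trans (finCongr h)
  have he (p : Fin a) (q : Fin b) (hp : p ≠ 0) : b ≤ e (p, q) := by
    simpa [e, finProdFinEquiv] using
      le_add_left (Nat.le_mul_of_pos_right b (Fin.pos_iff_ne_zero.mpr hp))
  have hrep := A.eq_reindex_single_kronecker_submatrix e 0 fun p q p' q' hp => by
    rcases hp with hp | hp
    · exact h0 _ _ (he p q hp)
    · rw [← hA.1.apply, h0 _ _ (he p' q' hp), star_zero]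
  refine ⟨_, hA.submatrix _, ?_, hrep⟩
  conv_rhs => rw [hrep, trace_reindex, trace_kronecker, trace_single_eq_same, one_mul]

theorem exists_conj_eq_reindex_single_kronecker {a b N : ℕ} [NeZero a] (h : a * b = N)
    {U X : Matrix (Fin N) (Fin N) ℂ} (hU : U ∈ unitaryGroup (Fin N) ℂ)
    (hX : X.PosSemidef) (hX1 : X.trace = 1)
    (hUX : ∀ x ∈ matSupport X, ∀ i : Fin N, b ≤ i → (U *ᵥ x) i = 0) :
    ∃ B : Matrix (Fin b) (Fin b) ℂ, B.PosSemidef ∧ B.trace = 1 ∧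
      U * X * Uᴴ =
        reindex (finProdFinEquiv.trans (finCongr h)) (finProdFinEquiv.trans (finCongr h))
          (single 0 0 1 ⊗ₖ B) := by
  have htrace : (U * X * Uᴴ).trace = 1 := by
    rw [trace_mul_cycle, ← star_eq_conjTranspose, mem_unitaryGroup_iff'.mp hU, one_mul, hX1]
  have hrows (i j : Fin N) (hi : b ≤ i) : (U * X * Uᴴ) i j = 0 := by
    have hcol : (U * X * Uᴴ) i j = (U *ᵥ (X *ᵥ (Uᴴ *ᵥ Pi.single j 1))) i := by
      simp only [mulVec_mulVec, mulVec_single_one]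
      rfl
    exact hcol ▸ hUX _ ⟨_, rfl⟩ i hi
  obtain ⟨B, hB, hBtr, hrep⟩ :=
    (hX.mul_mul_conjTranspose_same U).exists_eq_reindex_single_kronecker h hrows
  exact ⟨B, hB, hBtr.trans htrace, hrep⟩

theorem exists_joint_perfect_disentangling_unitary {n : ℕ}
    (ρ σ : Matrix (Fin (2 ^ n)) (Fin (2 ^ n)) ℂ)
    (hρ : ρ.PosSemidef) (hρ1 : ρ.trace = 1)
    (hσ : σ.PosSemidef) (hσ1 : σ.trace = 1)
    (k : ℕ) (hk : k = Module.finrank ℂ (matSupport ρ ⊔ matSupport σ : Submodule ℂ (Fin (2 ^ n) → ℂ)))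
    (hm : Nat.clog 2 k ≤ n) :
    ∃ U ∈ Matrix.unitaryGroup (Fin (2 ^ n)) ℂ,
      ∃ ρB σB : Matrix (Fin (2 ^ Nat.clog 2 k)) (Fin (2 ^ Nat.clog 2 k)) ℂ,
        ρB.PosSemidef ∧ ρB.trace = 1 ∧ σB.PosSemidef ∧ σB.trace = 1 ∧
        U * ρ * Uᴴ =
          Matrix.reindex
            (finProdFinEquiv.trans (finCongr (pow_sub_mul_pow 2 hm)))
            (finProdFinEquiv.trans (finCongr (pow_sub_mul_pow 2 hm)))
            ((Matrix.single (0 : Fin (2 ^ (n - Nat.clog 2 k)))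
                (0 : Fin (2 ^ (n - Nat.clog 2 k))) (1 : ℂ)) ⊗ₖ ρB) ∧
        U * σ * Uᴴ =
          Matrix.reindex
            (finProdFinEquiv.trans (finCongr (pow_sub_mul_pow 2 hm)))
            (finProdFinEquiv.trans (finCongr (pow_sub_mul_pow 2 hm)))
            ((Matrix.single (0 : Fin (2 ^ (n - Nat.clog 2 k)))
                (0 : Fin (2 ^ (n - Nat.clog 2 k))) (1 : ℂ)) ⊗ₖ σB) := by
  obtain ⟨U, hU, hUS⟩ := exists_unitary_mulVec_apply_eq_zero (matSupport ρ ⊔ matSupport σ)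
  have hUS' (x) (hx : x ∈ matSupport ρ ⊔ matSupport σ) (i : Fin (2 ^ n))
      (hi : 2 ^ Nat.clog 2 k ≤ (i : ℕ)) : (U *ᵥ x) i = 0 :=
    hUS x hx i (hk ▸ (Nat.le_pow_clog one_lt_two k).trans hi)
  obtain ⟨ρB, hρB, hρB1, hρU⟩ := exists_conj_eq_reindex_single_kronecker (pow_sub_mul_pow 2 hm)
    hU hρ hρ1 fun x hx => hUS' x (Submodule.mem_sup_left hx)
  obtain ⟨σB, hσB, hσB1, hσU⟩ := exists_conj_eq_reindex_single_kronecker (pow_sub_mul_pow 2 hm)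
    hU hσ hσ1 fun x hx => hUS' x (Submodule.mem_sup_right hx)
  exact ⟨U, hU, ρB, σB, hρB, hρB1, hσB, hσB1, hρU, hσU⟩
end
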